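/- arXiv:2101.04971 — 3 statements merged into one kernel-verified Lean document; each statement's English description precedes it below -/
import Mathlib

section
/- Let E be a completely positive super-operator and γ a Hermitian operator with E(γ) = γ. Writing γ = γ⁺ − γ⁻ for the positive and negative parts of γ (from the spectral decomposition), we have E(γ⁺) = γ⁺ and E(γ⁻) = γ⁻, provided E maps positive operators to positive operators and preserves trace on the supports. -/
/-!
Put `A = E(γ⁺)` and `B = E(γ⁻)`: both are positive, `A - B = γ⁺ - γ⁻` and `tr B = tr γ⁻`.
Let `Q` be the support projection of `γ⁻`, so that `γ⁺ Q = 0` and `γ⁻ Q = γ⁻`. Compressing by `Q`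
and by `1 - Q` gives `tr (Q A Q) + tr ((1 - Q) B (1 - Q)) = tr B - tr γ⁻ = 0`; both terms are
traces of positive matrices, so both compressions vanish, i.e. `A Q = 0` and `B = B Q`.
Multiplying `A - B = γ⁺ - γ⁻` by `Q` on the right then gives `B = γ⁻`, hence `A = γ⁺`.
-/
open Matrix
open scoped ComplexOrder

noncomputable def krausApply {d m : ℕ} (K : Fin m → Matrix (Fin d) (Fin d) ℂ)
    (γ : Matrix (Fin d) (Fin d) ℂ) : Matrix (Fin d) (Fin d) ℂ :=
  ∑ ℓ, K ℓ * γ * (K ℓ)ᴴ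

open scoped MatrixOrder

namespace Matrix

theorem IsIdempotentElem.trace_mul_mul_self {n R : Type*} [Fintype n] [CommSemiring R]
    {Q : Matrix n n R} (hQ : IsIdempotentElem Q) (B : Matrix n n R) :
    (Q * B * Q).trace = (B * Q).trace := by
  rw [trace_mul_cycle, hQ.eq, trace_mul_comm]

variable {n 𝕜 : Type*} [Fintype n] [DecidableEq n] [RCLike 𝕜]

theorem PosSemidef.mul_eq_zero_of_trace_conjTranspose_mul_mul_eq_zero {A Q : Matrix n n 𝕜}
    (hA : A.PosSemidef) (h : (Qᴴ * A * Q).trace = 0) : A * Q = 0 := by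
  obtain ⟨X, rfl⟩ := CStarAlgebra.nonneg_iff_eq_star_mul_self.mp hA.nonneg
  have hXQ : X * Q = 0 := by
    rw [← conjTranspose_mul_self_eq_zero, conjTranspose_mul,
      ← (hA.conjTranspose_mul_mul_same Q).trace_eq_zero_iff.mp h, star_eq_conjTranspose]
    simp only [mul_assoc]
  rw [mul_assoc, hXQ, mul_zero]

theorem IsHermitian.exists_isStarProjection {N P : Matrix n n 𝕜} (hN : N.IsHermitian)
    (hPN : P * N = 0) : ∃ Q : Matrix n n 𝕜, IsStarProjection Q ∧ N * Q = N ∧ P * Q = 0 := by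
  have hcont : ∀ f : ℝ → ℝ, ContinuousOn f (spectrum ℝ N) := fun f =>
    N.finite_real_spectrum.continuousOn f
  have hsa : IsSelfAdjoint N := hN
  -- As `0⁻¹ = 0`, `x * x⁻¹` is the indicator of `x ≠ 0`: this is the support projection of `N`.
  refine ⟨cfc (fun x : ℝ => x * x⁻¹) N, ⟨?_, cfc_predicate _ N⟩, ?_, ?_⟩
  · rw [IsIdempotentElem, ← cfc_mul _ _ N (hcont _) (hcont _)]
    exact cfc_congr fun x _ => by by_cases hx : x = 0 <;> simp [hx]
  · calc N * cfc (fun x : ℝ => x * x⁻¹) N = cfc (fun x : ℝ => x * (x * x⁻¹)) N := by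
          rw [cfc_mul (fun x : ℝ => x) (fun x : ℝ => x * x⁻¹) N (hcont _) (hcont _), cfc_id' ℝ N]
      _ = cfc (fun x : ℝ => x) N := cfc_congr fun x _ => by by_cases hx : x = 0 <;> simp [hx]
      _ = N := cfc_id' ℝ N
  · rw [cfc_mul _ _ N (hcont _) (hcont _), cfc_id' ℝ N, ← mul_assoc, hPN, zero_mul]

theorem PosSemidef.eq_of_sub_eq_sub_of_trace_eq {A B P N : Matrix n n 𝕜}
    (hA : A.PosSemidef) (hB : B.PosSemidef) (hN : N.IsHermitian) (hPN : P * N = 0)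
    (hsub : A - B = P - N) (htr : B.trace = N.trace) : A = P ∧ B = N := by
  obtain ⟨Q, hQ, hNQ, hPQ⟩ := hN.exists_isStarProjection hPN
  have hQH : Qᴴ = Q := hQ.isSelfAdjoint
  have hRH : (1 - Q)ᴴ = 1 - Q := hQ.one_sub.isSelfAdjoint
  have hQN : Q * N = N := by simpa only [conjTranspose_mul, hQH, hN.eq] using congrArg (·ᴴ) hNQ
  have hconj : Q * A * Q - Q * B * Q = -N := by
    calc Q * A * Q - Q * B * Q = Q * (A - B) * Q := by noncomm_ring
      _ = -N := by rw [hsub, mul_sub, sub_mul, mul_assoc, hPQ, hQN, hNQ, mul_zero, zero_sub]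
  have htrace : (Qᴴ * A * Q).trace + ((1 - Q)ᴴ * B * (1 - Q)).trace = 0 := by
    have := congrArg trace hconj
    rw [trace_sub, trace_neg, ← htr, hQ.isIdempotentElem.trace_mul_mul_self B] at this
    rw [hQH, hRH, hQ.one_sub.isIdempotentElem.trace_mul_mul_self, mul_sub, mul_one, trace_sub]
    linear_combination this
  obtain ⟨hAQ, hBR⟩ := (add_eq_zero_iff_of_nonneg
    (hA.conjTranspose_mul_mul_same Q).trace_nonneg
    (hB.conjTranspose_mul_mul_same (1 - Q)).trace_nonneg).mp htrace
  replace hAQ := hA.mul_eq_zero_of_trace_conjTranspose_mul_mul_eq_zero hAQ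
  replace hBR := hB.mul_eq_zero_of_trace_conjTranspose_mul_mul_eq_zero hBR
  have hBN : B = N := by
    have := congrArg (· * Q) hsub
    simp only [sub_mul, hAQ, hPQ, hNQ, zero_sub, neg_inj] at this
    rwa [mul_sub, mul_one, sub_eq_zero, this] at hBR
  exact ⟨by rwa [hBN, sub_left_inj] at hsub, hBN⟩

end Matrix

section Kraus

variable {d m : ℕ} (K : Fin m → Matrix (Fin d) (Fin d) ℂ)

theorem krausApply_sub (A B : Matrix (Fin d) (Fin d) ℂ) :
    krausApply K (A - B) = krausApply K A - krausApply K B := by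
  simp only [krausApply, mul_sub, sub_mul, Finset.sum_sub_distrib]

theorem trace_krausApply (htp : ∑ ℓ, (K ℓ)ᴴ * K ℓ = 1) (X : Matrix (Fin d) (Fin d) ℂ) :
    (krausApply K X).trace = X.trace := by
  calc (krausApply K X).trace = ((∑ ℓ, (K ℓ)ᴴ * K ℓ) * X).trace := by
        simp only [krausApply, trace_sum, Finset.sum_mul, trace_mul_cycle _ X]
    _ = X.trace := by rw [htp, one_mul]

theorem posSemidef_krausApply {X : Matrix (Fin d) (Fin d) ℂ} (hX : X.PosSemidef) :
    (krausApply K X).PosSemidef :=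
  posSemidef_sum _ fun ℓ _ => hX.mul_mul_conjTranspose_same (K ℓ)

end Kraus

theorem kraus_fixed_point_pos_neg_parts_general {d m : ℕ}
    (K : Fin m → Matrix (Fin d) (Fin d) ℂ)
    (htp : ∑ ℓ, (K ℓ)ᴴ * K ℓ = 1)
    (γ γp γm : Matrix (Fin d) (Fin d) ℂ)
    (hfix : krausApply K γ = γ)
    (hdecomp : γ = γp - γm)
    (hp : γp.PosSemidef) (hm : γm.PosSemidef)
    (horth : γp * γm = 0) :
    krausApply K γp = γp ∧ krausApply K γm = γm := by
  have hsub : krausApply K γp - krausApply K γm = γp - γm := by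
    rw [← krausApply_sub, ← hdecomp, hfix]
  exact (posSemidef_krausApply K hp).eq_of_sub_eq_sub_of_trace_eq (posSemidef_krausApply K hm)
    hm.isHermitian horth hsub (trace_krausApply K htp γm)

/-- For a completely positive trace-preserving super-operator `E`, if a Hermitian
operator `γ` is a fixed point of `E`, then the positive part `γ⁺` and negative
part `γ⁻` of its spectral decomposition (characterized by `γ = γ⁺ − γ⁻`, both
positive semidefinite, with orthogonal supports `γ⁺ γ⁻ = 0`) are separately
fixed points of `E`. -/
theorem kraus_fixed_point_pos_neg_parts {d m : ℕ}
    (K : Fin m → Matrix (Fin d) (Fin d) ℂ)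
    (htp : ∑ ℓ, (K ℓ)ᴴ * K ℓ = 1)
    (γ γp γm : Matrix (Fin d) (Fin d) ℂ)
    (hherm : γ.IsHermitian)
    (hfix : krausApply K γ = γ)
    (hdecomp : γ = γp - γm)
    (hp : γp.PosSemidef) (hm : γm.PosSemidef)
    (horth : γp * γm = 0) :
    krausApply K γp = γp ∧ krausApply K γm = γm :=
  kraus_fixed_point_pos_neg_parts_general K htp γ γp γm hfix hdecomp hp hm horth
end

section
/- Let E be a completely positive super-operator on a finite-dimensional Hilbert space and ρ a positive operator with E(ρ) = ρ. Then for every unit vector |ψ⟩ in the support of ρ, the support of E(|ψ⟩⟨ψ|) is contained in the support of ρ; that is, supp(ρ) is an invariant (bottom) subspace for E. -/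
/-!
For `x` in the kernel of `ρ`, `0 = ⟨x, ρ x⟩ = ∑ ℓ ⟨K ℓ† x, ρ (K ℓ† x)⟩` is a sum of nonnegative
terms, so every `K ℓ†` maps `ker ρ` into itself. Dually every `K ℓ` maps `(ker ρ)ᗮ = supp ρ` into
itself, and the support of `E(|ψ⟩⟨ψ|)` is spanned by the vectors `K ℓ ψ`.
-/

open Matrix
open scoped ComplexOrder

/-- The support of a positive operator, i.e. the range of the corresponding
linear map. -/
noncomputable def matSupport {d : ℕ} (ρ : Matrix (Fin d) (Fin d) ℂ) :
    Submodule ℂ (Fin d → ℂ) :=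
  LinearMap.range ρ.mulVecLin

namespace Matrix

variable {𝕜 n : Type*} [RCLike 𝕜] [Fintype n]

theorem IsHermitian.mem_range_mulVecLin_iff {A : Matrix n n 𝕜}
    (hA : A.IsHermitian) {u : n → 𝕜} :
    u ∈ LinearMap.range A.mulVecLin ↔ ∀ x, A *ᵥ x = 0 → star x ⬝ᵥ u = 0 := by
  classical
  have hrange : LinearMap.range (toEuclideanLin A) = (LinearMap.ker (toEuclideanLin A))ᗮ := by
    rw [← (isSymmetric_toEuclideanLin_iff.mpr hA).orthogonal_range,
      Submodule.orthogonal_orthogonal]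
  have hmem : u ∈ LinearMap.range A.mulVecLin ↔
      WithLp.toLp 2 u ∈ LinearMap.range (toEuclideanLin A) := by
    simp only [LinearMap.mem_range, mulVecLin_apply, toLpLin_apply,
      (WithLp.toLp_injective 2).eq_iff]
    exact ⟨fun ⟨y, hy⟩ => ⟨WithLp.toLp 2 y, hy⟩, fun ⟨y, hy⟩ => ⟨y.ofLp, hy⟩⟩
  rw [hmem, hrange, Submodule.mem_orthogonal]
  simp only [LinearMap.mem_ker, toLpLin_apply, WithLp.toLp_eq_zero,
    EuclideanSpace.inner_eq_star_dotProduct, dotProduct_comm]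
  exact ⟨fun h x => h (WithLp.toLp 2 x), fun h x => h x.ofLp⟩

theorem star_dotProduct_mul_mul_conjTranspose_mulVec (A B : Matrix n n 𝕜) (x : n → 𝕜) :
    star x ⬝ᵥ (B * A * Bᴴ) *ᵥ x = star (Bᴴ *ᵥ x) ⬝ᵥ A *ᵥ (Bᴴ *ᵥ x) := by
  rw [star_mulVec, conjTranspose_conjTranspose, dotProduct_mulVec, dotProduct_mulVec,
    dotProduct_mulVec, vecMul_vecMul, vecMul_vecMul, Matrix.mul_assoc]

end Matrix

section Kraus

variable {d m : ℕ} (K : Fin m → Matrix (Fin d) (Fin d) ℂ) {ρ : Matrix (Fin d) (Fin d) ℂ}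

theorem mulVec_conjTranspose_mulVec_eq_zero_of_krausApply_eq (hρ : ρ.PosSemidef)
    (hfix : krausApply K ρ = ρ) {x : Fin d → ℂ} (hx : ρ *ᵥ x = 0) (ℓ : Fin m) :
    ρ *ᵥ ((K ℓ)ᴴ *ᵥ x) = 0 := by
  have hsum : ∑ ℓ, star ((K ℓ)ᴴ *ᵥ x) ⬝ᵥ ρ *ᵥ ((K ℓ)ᴴ *ᵥ x) = 0 := by
    simp_rw [← star_dotProduct_mul_mul_conjTranspose_mulVec, ← dotProduct_sum, ← sum_mulVec]
    rw [← krausApply, hfix, hx, dotProduct_zero]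
  rw [← hρ.dotProduct_mulVec_zero_iff]
  exact (Finset.sum_eq_zero_iff_of_nonneg fun ℓ _ => hρ.dotProduct_mulVec_nonneg _).mp hsum ℓ
    (Finset.mem_univ ℓ)

theorem mulVec_mem_matSupport_of_krausApply_eq (hρ : ρ.PosSemidef) (hfix : krausApply K ρ = ρ)
    {ψ : Fin d → ℂ} (hψ : ψ ∈ matSupport ρ) (ℓ : Fin m) : K ℓ *ᵥ ψ ∈ matSupport ρ := by
  obtain ⟨v, rfl⟩ := hψ
  refine hρ.1.mem_range_mulVecLin_iff.mpr fun x hx => ?_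
  calc star x ⬝ᵥ K ℓ *ᵥ ρ.mulVecLin v = star (ρ *ᵥ ((K ℓ)ᴴ *ᵥ x)) ⬝ᵥ v := by
        rw [star_mulVec, star_mulVec, hρ.1.eq, conjTranspose_conjTranspose, mulVecLin_apply,
          dotProduct_mulVec, dotProduct_mulVec]
    _ = 0 := by
        rw [mulVec_conjTranspose_mulVec_eq_zero_of_krausApply_eq K hρ hfix hx, star_zero,
          zero_dotProduct]

theorem krausApply_vecMulVec_mulVec (ψ y : Fin d → ℂ) :
    krausApply K (vecMulVec ψ (star ψ)) *ᵥ y = ∑ ℓ, (star (K ℓ *ᵥ ψ) ⬝ᵥ y) • (K ℓ *ᵥ ψ) := by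
  simp only [krausApply, sum_mulVec, mul_vecMulVec, vecMulVec_mul, ← star_mulVec,
    vecMulVec_mulVec, op_smul_eq_smul]

theorem matSupport_krausApply_vecMulVec_le (ψ : Fin d → ℂ) :
    matSupport (krausApply K (vecMulVec ψ (star ψ))) ≤
      Submodule.span ℂ (Set.range fun ℓ => K ℓ *ᵥ ψ) := by
  rintro _ ⟨y, rfl⟩
  rw [mulVecLin_apply, krausApply_vecMulVec_mulVec]
  exact Submodule.sum_mem _ fun ℓ _ => Submodule.smul_mem _ _ (Submodule.subset_span ⟨ℓ, rfl⟩)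

end Kraus

theorem support_of_fixed_point_is_invariant_general {d m : ℕ}
    (K : Fin m → Matrix (Fin d) (Fin d) ℂ)
    (ρ : Matrix (Fin d) (Fin d) ℂ) (hρ : ρ.PosSemidef)
    (hfix : krausApply K ρ = ρ)
    (ψ : Fin d → ℂ)
    (hψ : ψ ∈ matSupport ρ) :
    matSupport (krausApply K (vecMulVec ψ (star ψ))) ≤ matSupport ρ :=
  (matSupport_krausApply_vecMulVec_le K ψ).trans <| Submodule.span_le.mpr <|
    Set.range_subset_iff.mpr <| mulVec_mem_matSupport_of_krausApply_eq K hρ hfix hψ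

/-- If `ρ` is a positive fixed point of a completely positive super-operator `E`,
then for every unit vector `|ψ⟩` in the support of `ρ`, the support of
`E(|ψ⟩⟨ψ|)` is contained in the support of `ρ`: `supp(ρ)` is a bottom
(invariant) subspace for `E`. -/
theorem support_of_fixed_point_is_invariant {d m : ℕ}
    (K : Fin m → Matrix (Fin d) (Fin d) ℂ)
    (ρ : Matrix (Fin d) (Fin d) ℂ) (hρ : ρ.PosSemidef)
    (hfix : krausApply K ρ = ρ)
    (ψ : Fin d → ℂ) (hψnorm : star ψ ⬝ᵥ ψ = 1)
    (hψ : ψ ∈ matSupport ρ) :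
    matSupport (krausApply K (vecMulVec ψ (star ψ))) ≤ matSupport ρ :=
  support_of_fixed_point_is_invariant_general K ρ hρ hfix ψ hψ
end

section
/- Let F be a completely positive super-operator on a finite-dimensional Hilbert space, Γ a subspace containing the supports of all Hermitian fixed points of F and such that F_ℓ Γ ⊆ Γ for all Kraus operators F_ℓ, and P the projection super-operator onto the orthogonal complement Γ⊥ (i.e., P(γ) = P_{Γ⊥} γ P_{Γ⊥}). If Q is a projection super-operator Q(γ) = P_Q γ P_Q with P_Q Γ = 0 (i.e., Γ ⊆ ker P_Q), then for all i ≥ 0: Q ∘ F^i = Q ∘ (F ∘ P)^i. -/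
/-!
Since `Γ` is invariant under every Kraus operator and killed by `P_Q`, each term
`P_Q F_ℓ` annihilates `Γ`, so it does not see the `Γ`-component of its input:
`P_Q F_ℓ = P_Q F_ℓ P_{Γ⊥}`, and dually `F_ℓ† P_Q = P_{Γ⊥} F_ℓ† P_Q`. Hence
`Q ∘ F = Q ∘ F ∘ P`. The same holds with `P_Q` replaced by `P_{Γ⊥}` itself, which
lets the identity be pushed through all iterates by induction.
-/

noncomputable def clmKrausApply {d m : ℕ}
    (K : Fin m → (EuclideanSpace ℂ (Fin d) →L[ℂ] EuclideanSpace ℂ (Fin d)))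
    (γ : EuclideanSpace ℂ (Fin d) →L[ℂ] EuclideanSpace ℂ (Fin d)) :
    EuclideanSpace ℂ (Fin d) →L[ℂ] EuclideanSpace ℂ (Fin d) :=
  ∑ ℓ, (K ℓ).comp (γ.comp (ContinuousLinearMap.adjoint (K ℓ)))

/-- The orthogonal projector onto a subspace, as an endomorphism. -/
noncomputable def projCLM {d : ℕ} (Γ : Submodule ℂ (EuclideanSpace ℂ (Fin d))) :
    EuclideanSpace ℂ (Fin d) →L[ℂ] EuclideanSpace ℂ (Fin d) :=
  Γ.subtypeL.comp (Submodule.orthogonalProjection Γ)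

section InnerProductSpace

variable {𝕜 E F : Type*} [RCLike 𝕜]
  [NormedAddCommGroup E] [InnerProductSpace 𝕜 E]
  [NormedAddCommGroup F] [InnerProductSpace 𝕜 F]

def sandwich (π γ : E →L[𝕜] E) : E →L[𝕜] E := π.comp (γ.comp π)

theorem map_starProjection_orthogonal_of_forall_mem_eq_zero
    {Γ : Submodule 𝕜 E} [Γ.HasOrthogonalProjection] (A : E →L[𝕜] F)
    (hA : ∀ ψ ∈ Γ, A ψ = 0) (v : E) :
    A (Γᗮ.starProjection v) = A v := by
  rw [Submodule.starProjection_orthogonal, sub_apply, map_sub,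
    hA _ (Γ.starProjection_apply_mem v), sub_zero, ContinuousLinearMap.id_apply]

theorem adjoint_apply_mem_orthogonal_of_forall_mem_eq_zero [CompleteSpace E] [CompleteSpace F]
    {Γ : Submodule 𝕜 E} (A : E →L[𝕜] F) (hA : ∀ ψ ∈ Γ, A ψ = 0) (w : F) :
    ContinuousLinearMap.adjoint A w ∈ Γᗮ := fun ψ hψ => by
  rw [ContinuousLinearMap.adjoint_inner_right, hA ψ hψ, inner_zero_left]

end InnerProductSpace

section Kraus

variable {d m : ℕ} {K : Fin m → (EuclideanSpace ℂ (Fin d) →L[ℂ] EuclideanSpace ℂ (Fin d))}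
  {Γ : Submodule ℂ (EuclideanSpace ℂ (Fin d))}

theorem sandwich_clmKrausApply_sandwich_projCLM (hinv : ∀ ℓ, ∀ ψ ∈ Γ, K ℓ ψ ∈ Γ)
    {π : EuclideanSpace ℂ (Fin d) →L[ℂ] EuclideanSpace ℂ (Fin d)}
    (hπ : ContinuousLinearMap.adjoint π = π) (hker : ∀ ψ ∈ Γ, π ψ = 0)
    (γ : EuclideanSpace ℂ (Fin d) →L[ℂ] EuclideanSpace ℂ (Fin d)) :
    sandwich π (clmKrausApply K (sandwich (projCLM Γᗮ) γ)) =
      sandwich π (clmKrausApply K γ) := by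
  ext1 v
  simp only [sandwich, clmKrausApply, ContinuousLinearMap.comp_apply,
    sum_apply, map_sum]
  refine Finset.sum_congr rfl fun ℓ _ => ?_
  have hkill : ∀ ψ ∈ Γ, (π.comp (K ℓ)) ψ = 0 := fun ψ hψ => hker _ (hinv ℓ ψ hψ)
  have hright : projCLM Γᗮ (ContinuousLinearMap.adjoint (K ℓ) (π v)) =
      ContinuousLinearMap.adjoint (K ℓ) (π v) := by
    refine Submodule.starProjection_eq_self_iff.mpr ?_
    simpa [ContinuousLinearMap.adjoint_comp, hπ] using
      adjoint_apply_mem_orthogonal_of_forall_mem_eq_zero _ hkill v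
  rw [hright]
  exact map_starProjection_orthogonal_of_forall_mem_eq_zero _ hkill _

theorem sandwich_comp_iterate_clmKrausApply (hinv : ∀ ℓ, ∀ ψ ∈ Γ, K ℓ ψ ∈ Γ) (i : ℕ) :
    ∀ π : EuclideanSpace ℂ (Fin d) →L[ℂ] EuclideanSpace ℂ (Fin d),
      ContinuousLinearMap.adjoint π = π → (∀ ψ ∈ Γ, π ψ = 0) →
        sandwich π ∘ (clmKrausApply K)^[i] =
          sandwich π ∘ (clmKrausApply K ∘ sandwich (projCLM Γᗮ))^[i] := by
  induction i with
  | zero => intros; rfl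
  | succ i ih =>
    intro π hπ hker
    have hP : ContinuousLinearMap.adjoint (projCLM Γᗮ) = projCLM Γᗮ :=
      (isSelfAdjoint_starProjection Γᗮ).adjoint_eq
    have hPker : ∀ ψ ∈ Γ, projCLM Γᗮ ψ = 0 := fun ψ hψ =>
      Submodule.starProjection_orthogonal_apply_eq_zero hψ
    funext γ
    simp only [Function.comp_apply, Function.iterate_succ_apply']
    rw [← sandwich_clmKrausApply_sandwich_projCLM hinv hπ hker]
    exact congrArg (fun γ' => sandwich π (clmKrausApply K γ')) (congrFun (ih _ hP hPker) γ)

end Kraus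

theorem removal_of_fixed_point_subspace_general {d m : ℕ}
    (K : Fin m → (EuclideanSpace ℂ (Fin d) →L[ℂ] EuclideanSpace ℂ (Fin d)))
    (Γ : Submodule ℂ (EuclideanSpace ℂ (Fin d)))
    (hinv : ∀ ℓ, ∀ ψ ∈ Γ, K ℓ ψ ∈ Γ)
    (PQ : EuclideanSpace ℂ (Fin d) →L[ℂ] EuclideanSpace ℂ (Fin d))
    (hPQsa : ContinuousLinearMap.adjoint PQ = PQ)
    (hker : ∀ ψ ∈ Γ, PQ ψ = 0) :
    ∀ i : ℕ,
      (fun γ => PQ.comp (γ.comp PQ)) ∘ (clmKrausApply K)^[i] =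
        (fun γ => PQ.comp (γ.comp PQ)) ∘
          (clmKrausApply K ∘
            fun γ => (projCLM Γᗮ).comp (γ.comp (projCLM Γᗮ)))^[i] :=
  fun i => sandwich_comp_iterate_clmKrausApply hinv i PQ hPQsa hker

/-- Let `F` be completely positive, `Γ` a subspace containing the supports of
all Hermitian fixed points of `F` and invariant under all Kraus operators of
`F`, and `P` the projection super-operator onto `Γ⊥`. If `Q` is a projection
super-operator `Q(γ) = P_Q γ P_Q` with `Γ ⊆ ker P_Q`, then for all `i ≥ 0`,
`Q ∘ F^i = Q ∘ (F ∘ P)^i`. -/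
theorem removal_of_fixed_point_subspace {d m : ℕ}
    (K : Fin m → (EuclideanSpace ℂ (Fin d) →L[ℂ] EuclideanSpace ℂ (Fin d)))
    (Γ : Submodule ℂ (EuclideanSpace ℂ (Fin d)))
    (hsupp : ∀ γ : EuclideanSpace ℂ (Fin d) →L[ℂ] EuclideanSpace ℂ (Fin d),
      ContinuousLinearMap.adjoint γ = γ → clmKrausApply K γ = γ →
        ∀ v, γ v ∈ Γ)
    (hinv : ∀ ℓ, ∀ ψ ∈ Γ, K ℓ ψ ∈ Γ)
    (PQ : EuclideanSpace ℂ (Fin d) →L[ℂ] EuclideanSpace ℂ (Fin d))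
    (hPQsa : ContinuousLinearMap.adjoint PQ = PQ)
    (hPQidem : PQ.comp PQ = PQ)
    (hker : ∀ ψ ∈ Γ, PQ ψ = 0) :
    ∀ i : ℕ,
      (fun γ => PQ.comp (γ.comp PQ)) ∘ (clmKrausApply K)^[i] =
        (fun γ => PQ.comp (γ.comp PQ)) ∘
          (clmKrausApply K ∘
            fun γ => (projCLM Γᗮ).comp (γ.comp (projCLM Γᗮ)))^[i] :=
  removal_of_fixed_point_subspace_general K Γ hinv PQ hPQsa hker
end
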